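/- arXiv:1206.3072 — 2 statements merged into one kernel-verified Lean document; each statement's English description precedes it below -/
import Mathlib

section
/- Let (ℋ, μ) be a linear classification problem with hard core 𝒞, and suppose there exists λ̄ ∈ ℝⁿ with y(Hλ̄)(x) = 0 for all sampled points in 𝒞 and y(Hλ̄)(x) > 0 for all sampled points in 𝒞^c (as holds with probability 1 for a finite i.i.d. sample). Then inf over λ ∈ ℝⁿ of the full empirical risk equals the inf over λ of the empirical risk restricted to 𝒞: inf_λ R^m_φ(Hλ) = inf_λ R^m_{φ;𝒞}(Hλ), for any φ ∈ Φ. -/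
/-!
Moving along the ray `λ + t • λ̄` leaves every margin on the hard core unchanged and drives every
margin off the hard core to `+∞`, so as `t → ∞` the full empirical risk at `λ + t • λ̄` tends to the
hard-core risk at `λ`. Hence the full infimum is at most the hard-core one; the reverse inequality
holds because a convex loss vanishing at `-∞` is monotone and so nonnegative.
-/

open Filter Set Topology Finset

theorem ConvexOn.monotone_of_tendsto_atBot {φ : ℝ → ℝ} {c : ℝ} (hφ : ConvexOn ℝ univ φ)
    (hlim : Tendsto φ atBot (𝓝 c)) : Monotone φ := by
  intro a b hab
  rcases hab.eq_or_lt with rfl | hab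
  · exact le_rfl
  have hden : Tendsto (fun z : ℝ => a - z) atBot atTop :=
    tendsto_atTop_add_const_left _ a tendsto_neg_atBot_atTop
  have hslope : Tendsto (fun z => (φ a - φ z) / (a - z)) atBot (𝓝 0) := by
    simpa using (tendsto_const_nhds.sub hlim).div_atTop hden
  have : 0 ≤ (φ b - φ a) / (b - a) := le_of_tendsto hslope <| by
    filter_upwards [eventually_lt_atBot a] with z hz
    exact hφ.slope_mono_adjacent (mem_univ z) (mem_univ b) hz hab
  simpa using (le_div_iff₀ (sub_pos.2 hab)).1 this

theorem ciInf_eq_ciInf_of_le_of_tendsto {α β γ : Type*} [Nonempty α]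
    [ConditionallyCompleteLattice γ] [TopologicalSpace γ] [OrderClosedTopology γ]
    {F G : α → γ} {l : Filter β} [l.NeBot] (hG : BddBelow (range G)) (hle : G ≤ F)
    (hlim : ∀ a, ∃ u : β → α, Tendsto (F ∘ u) l (𝓝 (G a))) :
    ⨅ a, F a = ⨅ a, G a := by
  have hF : BddBelow (range F) := by
    obtain ⟨c, hc⟩ := hG
    exact ⟨c, forall_mem_range.2 fun a => (hc (mem_range_self a)).trans (hle a)⟩
  refine le_antisymm (le_ciInf fun a => ?_) (ciInf_mono hG hle)
  obtain ⟨u, hu⟩ := hlim a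
  exact ge_of_tendsto hu (Eventually.of_forall fun b => ciInf_le hF (u b))

theorem tendsto_indicator_loss_along_ray {φ : ℝ → ℝ} (hlim : Tendsto φ atBot (𝓝 0))
    {α : Type*} {s : Set α} {p : α} {a b : ℝ} (hzero : p ∈ s → b = 0) (hpos : p ∉ s → 0 < b) :
    Tendsto (fun t : ℝ => φ (-(a + t * b))) atTop (𝓝 (s.indicator (fun _ => φ (-a)) p)) := by
  by_cases hp : p ∈ s
  · simp [hp, hzero hp]
  · rw [indicator_of_notMem hp]
    refine hlim.comp (tendsto_neg_atTop_atBot.comp (tendsto_atTop_add_const_left _ a ?_))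
    exact tendsto_id.atTop_mul_const (hpos hp)

theorem mul_sum_add_smul_mul {ι : Type*} [Fintype ι] (c t : ℝ) (w v z : ι → ℝ) :
    c * ∑ j, (w + t • v) j * z j = c * ∑ j, w j * z j + t * (c * ∑ j, v j * z j) := by
  simp only [mul_sum, ← sum_add_distrib]
  refine sum_congr rfl fun j _ => ?_
  simp only [Pi.add_apply, Pi.smul_apply, smul_eq_mul]
  ring

theorem empirical_risk_inf_eq_hard_core_inf_general
    {X : Type*}
    (n : ℕ) (h : Fin n → X → ℝ)
    (C : Set (X × ℝ))
    (φ : ℝ → ℝ) (hconv : ConvexOn ℝ Set.univ φ)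
    (hlim : Filter.Tendsto φ Filter.atBot (nhds 0))
    (m : ℕ) (x : Fin m → X) (y : Fin m → ℝ)
    (lb : Fin n → ℝ)
    (hlbC : ∀ i, (x i, y i) ∈ C → y i * (∑ j, lb j * h j (x i)) = 0)
    (hlbCc : ∀ i, (x i, y i) ∉ C → 0 < y i * (∑ j, lb j * h j (x i))) :
    (⨅ lam : Fin n → ℝ,
        (∑ i, φ (-(y i * ∑ j, lam j * h j (x i)))) / m)
      = ⨅ lam : Fin n → ℝ,
        (∑ i, C.indicator (fun _ => φ (-(y i * ∑ j, lam j * h j (x i)))) (x i, y i)) / m := by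
  have hφ : ∀ z, 0 ≤ φ z := (hconv.monotone_of_tendsto_atBot hlim).le_of_tendsto hlim
  refine ciInf_eq_ciInf_of_le_of_tendsto (l := (atTop : Filter ℝ)) ⟨0, ?_⟩ (fun lam => ?_)
    fun lam => ⟨fun t => lam + t • lb, ?_⟩
  · rintro _ ⟨lam, rfl⟩
    exact div_nonneg (sum_nonneg fun i _ => indicator_nonneg (fun _ _ => hφ _) _) m.cast_nonneg
  · gcongr with i
    exact indicator_apply_le' (fun _ => le_rfl) fun _ => hφ _
  · refine (tendsto_finsetSum _ fun i _ => ?_).div_const _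
    simp only [mul_sum_add_smul_mul]
    exact tendsto_indicator_loss_along_ray hlim (hlbC i) (hlbCc i)

theorem empirical_risk_inf_eq_hard_core_inf
    {X : Type*} [MeasurableSpace X]
    (n : ℕ) (h : Fin n → X → ℝ)
    (hbd : ∀ i x, |h i x| ≤ 1)
    (C : Set (X × ℝ))
    (φ : ℝ → ℝ) (hconv : ConvexOn ℝ Set.univ φ) (h0 : 0 < φ 0)
    (hlim : Filter.Tendsto φ Filter.atBot (nhds 0))
    (m : ℕ) (x : Fin m → X) (y : Fin m → ℝ)
    (hy : ∀ i, y i = 1 ∨ y i = -1)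
    (lb : Fin n → ℝ)
    (hlbC : ∀ i, (x i, y i) ∈ C → y i * (∑ j, lb j * h j (x i)) = 0)
    (hlbCc : ∀ i, (x i, y i) ∉ C → 0 < y i * (∑ j, lb j * h j (x i))) :
    (⨅ lam : Fin n → ℝ,
        (∑ i, φ (-(y i * ∑ j, lam j * h j (x i)))) / m)
      = ⨅ lam : Fin n → ℝ,
        (∑ i, C.indicator (fun _ => φ (-(y i * ∑ j, lam j * h j (x i)))) (x i, y i)) / m :=
  empirical_risk_inf_eq_hard_core_inf_general n h C φ hconv hlim m x y lb hlbC hlbCc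
end

section
/- Every linear classification problem (ℋ, μ) has a primal hard core: a minimal (up to μ-null sets) element 𝒫 of 𝒮_𝒫(ℋ,μ), i.e., 𝒫 ∈ 𝒮_𝒫(ℋ,μ) and for every C ∈ 𝒮_𝒫(ℋ,μ), μ(𝒫 \ C) = 0. -/
open MeasureTheory Filter

/-- `C` is in the primal collection `𝒮_𝒫(ℋ,μ)`. -/
def PrimalSet {X : Type*} [MeasurableSpace X]
    (μ : Measure (X × ℝ)) (n : ℕ) (h : Fin n → X → ℝ) (C : Set (X × ℝ)) : Prop :=
  ∃ lam : ℕ → Fin n → ℝ,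
    (∀ i, ∀ z ∈ C, z.2 * (∑ j, lam i j * h j z.1) = 0) ∧
    (∀ᵐ z ∂μ, z ∈ Cᶜ →
      Monotone (fun i => z.2 * (∑ j, lam i j * h j z.1)) ∧
      Tendsto (fun i => z.2 * (∑ j, lam i j * h j z.1)) atTop atTop)

open Set Finset

/-! Among the measurable sets of a family closed under countable intersections, one of least
`μ`-measure exists (intersect a minimising sequence), and by minimality it is contained in every
member of the family up to a null set. For `𝒮_𝒫` the closure under countable intersections comes
from the diagonal sums `∑_{k ≤ i} (λ_{k,i} - λ_{k,0})`: each summand is `0` on the `k`-th set and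
nonnegative and nondecreasing in `i` elsewhere, so the margins of the diagonal sums are monotone,
and they diverge wherever one summand does. -/

theorem exists_ae_minimal_of_iInter_mem {α : Type*} [MeasurableSpace α] (μ : Measure α)
    [IsFiniteMeasure μ] {S : Set (Set α)} (hne : S.Nonempty)
    (hmeas : ∀ C ∈ S, MeasurableSet C)
    (hiInter : ∀ C : ℕ → Set α, (∀ k, C k ∈ S) → ⋂ k, C k ∈ S) :
    ∃ P ∈ S, ∀ C ∈ S, μ (P \ C) = 0 := by
  obtain ⟨u, -, hu_lim, hu_mem⟩ :=
    exists_seq_tendsto_sInf (hne.image μ) (OrderBot.bddBelow (μ '' S))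
  choose C hCS hμC using hu_mem
  set P := ⋂ k, C k
  have hPS : P ∈ S := hiInter C hCS
  have hP_le : μ P ≤ sInf (μ '' S) :=
    ge_of_tendsto' hu_lim fun k => hμC k ▸ measure_mono (iInter_subset C k)
  refine ⟨P, hPS, fun D hD => ?_⟩
  have hPD : P ∩ D ∈ S := by
    have hpair : P ∩ D = ⋂ k : ℕ, if k = 0 then P else D := by
      ext z
      refine ⟨fun hz => mem_iInter.2 fun k => ?_, fun hz => ⟨by simpa using mem_iInter.1 hz 0,
        by simpa using mem_iInter.1 hz 1⟩⟩
      split_ifs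
      exacts [hz.1, hz.2]
    rw [hpair]
    exact hiInter _ fun k => by split_ifs; exacts [hPS, hD]
  have hP_ae : (P ∩ D : Set α) =ᵐ[μ] P :=
    ae_eq_of_subset_of_measure_ge inter_subset_left (hP_le.trans (sInf_le ⟨_, hPD, rfl⟩))
      (hmeas _ hPD).nullMeasurableSet (measure_ne_top μ P)
  exact ae_le_set.1 (hP_ae.symm.le.trans (inter_subset_right : P ∩ D ⊆ D).eventuallyLE)

def diagonalSum {M : Type*} [AddCommGroup M] (a : ℕ → ℕ → M) (i : ℕ) : M :=
  ∑ k ∈ range (i + 1), (a k i - a k 0)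

theorem map_diagonalSum {M N F : Type*} [AddCommGroup M] [AddCommGroup N] [FunLike F M N]
    [AddMonoidHomClass F M N] (f : F) (a : ℕ → ℕ → M) (i : ℕ) :
    f (diagonalSum a i) = diagonalSum (fun k i => f (a k i)) i := by
  simp only [diagonalSum, map_sum, map_sub]

section DiagonalSum

variable {a : ℕ → ℕ → ℝ}

theorem monotone_diagonalSum (ha : ∀ k, Monotone (a k)) : Monotone (diagonalSum a) := by
  intro i i' hii'
  have hnonneg : ∀ k i, 0 ≤ a k i - a k 0 := fun k i => sub_nonneg.2 (ha k (Nat.zero_le i))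
  calc diagonalSum a i
      ≤ ∑ k ∈ range (i + 1), (a k i' - a k 0) :=
        sum_le_sum fun k _ => sub_le_sub_right (ha k hii') _
    _ ≤ diagonalSum a i' :=
        sum_le_sum_of_subset_of_nonneg (range_subset_range.2 (by omega))
          fun k _ _ => hnonneg k i'

theorem tendsto_diagonalSum (ha : ∀ k, Monotone (a k)) {k₀ : ℕ}
    (hk₀ : Tendsto (a k₀) atTop atTop) : Tendsto (diagonalSum a) atTop atTop := by
  refine tendsto_atTop_mono' atTop ?_ (tendsto_atTop_add_const_right atTop (-a k₀ 0) hk₀)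
  filter_upwards [eventually_ge_atTop k₀] with i hi
  rw [← sub_eq_add_neg]
  exact single_le_sum (f := fun k => a k i - a k 0)
    (fun k _ => sub_nonneg.2 (ha k (Nat.zero_le i))) (mem_range.2 (by omega))

end DiagonalSum

section PrimalSet

variable {X : Type*} [MeasurableSpace X] {μ : Measure (X × ℝ)} {n : ℕ} {h : Fin n → X → ℝ}

/-- The margin `y (Hλ)(x)` at `z = (x, y)`, linear in `λ`. -/
def margin (h : Fin n → X → ℝ) (z : X × ℝ) : (Fin n → ℝ) →ₗ[ℝ] ℝ where
  toFun lam := z.2 * ∑ j, lam j * h j z.1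
  map_add' lam lam' := by simp only [Pi.add_apply, add_mul, sum_add_distrib, mul_add]
  map_smul' c lam := by simp only [Pi.smul_apply, smul_eq_mul, RingHom.id_apply, mul_sum]; ring_nf

theorem primalSet_univ : PrimalSet μ n h univ :=
  ⟨0, fun _ _ _ => by simp, ae_of_all μ fun _ hz => absurd (mem_univ _) hz⟩

theorem primalSet_iInter {C : ℕ → Set (X × ℝ)} (hC : ∀ k, PrimalSet μ n h (C k)) :
    PrimalSet μ n h (⋂ k, C k) := by
  choose lam hzero hae using hC
  change ∀ k i, ∀ z ∈ C k, margin h z (lam k i) = 0 at hzero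
  refine ⟨diagonalSum lam, fun i z hz => ?_, ?_⟩
  · change margin h z _ = 0
    simp [diagonalSum, hzero _ _ z (mem_iInter.1 hz _)]
  · filter_upwards [ae_all_iff.2 hae] with z hz hzC
    change Monotone (fun i => margin h z _) ∧ Tendsto (fun i => margin h z _) atTop atTop
    simp only [map_diagonalSum]
    have hmono : ∀ k, Monotone fun i => margin h z (lam k i) := fun k => by
      by_cases hk : z ∈ C k
      · simpa [hzero k _ z hk] using monotone_const
      · exact (hz k hk).1
    obtain ⟨k, hk⟩ : ∃ k, z ∉ C k := by simpa using hzC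
    exact ⟨monotone_diagonalSum hmono, tendsto_diagonalSum hmono (hz k hk).2⟩

end PrimalSet

theorem primal_hard_core_exists_general
    {X : Type*} [MeasurableSpace X]
    (μ : Measure (X × ℝ)) [IsProbabilityMeasure μ]
    (n : ℕ) (h : Fin n → X → ℝ) :
    ∃ P : Set (X × ℝ), MeasurableSet P ∧ PrimalSet μ n h P ∧
      ∀ C : Set (X × ℝ), MeasurableSet C → PrimalSet μ n h C → μ (P \ C) = 0 := by
  obtain ⟨P, ⟨hPmeas, hP⟩, hPmin⟩ :=
    exists_ae_minimal_of_iInter_mem μ (S := {C | MeasurableSet C ∧ PrimalSet μ n h C})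
      ⟨univ, .univ, primalSet_univ⟩ (fun _ hC => hC.1)
      fun C hC => ⟨.iInter fun k => (hC k).1, primalSet_iInter fun k => (hC k).2⟩
  exact ⟨P, hPmeas, hP, fun C hCmeas hC => hPmin C ⟨hCmeas, hC⟩⟩

theorem primal_hard_core_exists
    {X : Type*} [MeasurableSpace X]
    (μ : Measure (X × ℝ)) [IsProbabilityMeasure μ]
    (n : ℕ) (h : Fin n → X → ℝ)
    (hmeas : ∀ i, Measurable (h i)) (hbd : ∀ i x, |h i x| ≤ 1) :
    ∃ P : Set (X × ℝ), MeasurableSet P ∧ PrimalSet μ n h P ∧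
      ∀ C : Set (X × ℝ), MeasurableSet C → PrimalSet μ n h C → μ (P \ C) = 0 :=
  primal_hard_core_exists_general μ n h
end
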